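/- For any finite abstract simplicial complex G, the super trace of the Green function g = (L')^{-1}, namely Σ_x (-1)^{dim(x)} g(x,x), equals the Euler characteristic χ(G). -/
import Mathlib

open Finset Matrix


/-- The connection matrix `L' = 1 + A'` of a finite abstract simplicial complex `G`:
`L'_{xy} = 1` iff the faces `x` and `y` intersect (in particular `L'_{xx} = 1`). -/
def connMat {V : Type*} [DecidableEq V] (G : Finset (Finset V)) :
    Matrix G G ℚ := fun x y =>
  if ((x : Finset V) ∩ (y : Finset V)).Nonempty then 1 else 0

/-- Euler characteristic `χ(G) = ∑_x (-1)^{dim x}` with `dim x = card x - 1`. -/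
def eulerChar {V : Type*} [DecidableEq V] (G : Finset (Finset V)) : ℚ :=
  ∑ x ∈ G, (-1 : ℚ) ^ (x.card - 1)

section Aux

variable {V : Type*} [DecidableEq V]

/-- sign weight -/
private def om (s : Finset V) : ℚ := (-1 : ℚ) ^ (s.card - 1)

private lemma powsumQ (u : Finset V) :
    ∑ m ∈ u.powerset, (-1:ℚ)^m.card = if u = ∅ then 1 else 0 := by
  have h := @Finset.sum_powerset_neg_one_pow_card V _ u
  have h2 := congrArg (fun n : ℤ => (n : ℚ)) h
  push_cast at h2
  split_ifs at h2 ⊢ with hh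
  · simpa using h2
  · simpa using h2

private lemma om_eq (s : Finset V) (hs : s.Nonempty) :
    om s = -(-1:ℚ)^s.card := by
  obtain ⟨n, hn⟩ : ∃ n, s.card = n + 1 :=
    ⟨s.card - 1, (Nat.succ_pred_eq_of_pos (Finset.card_pos.mpr hs)).symm⟩
  rw [om, hn]
  simp [pow_succ]

private lemma om_sq (s : Finset V) : om s * om s = 1 := by
  rw [om, ← mul_pow]; norm_num

/-- key powerset alternating-sum computation -/
private lemma keysum (u x : Finset V) (hu : u.Nonempty) :
    ∑ y ∈ u.powerset.filter (fun y => (x ∩ y).Nonempty), (-1:ℚ)^y.card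
      = -(if u ⊆ x then 1 else 0) := by
  have hsplit := Finset.sum_filter_add_sum_filter_not u.powerset
    (fun y => (x ∩ y).Nonempty) (fun y => (-1:ℚ)^y.card)
  have h2 : u.powerset.filter (fun y => ¬ (x ∩ y).Nonempty) = (u \ x).powerset := by
    ext y
    simp only [mem_filter, mem_powerset, Finset.not_nonempty_iff_eq_empty,
      Finset.subset_sdiff, ← Finset.disjoint_iff_inter_eq_empty]
    exact and_congr_right (fun _ => disjoint_comm)
  rw [h2, powsumQ, powsumQ] at hsplit
  have h3 : (u \ x = ∅) ↔ u ⊆ x := Finset.sdiff_eq_empty_iff_subset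
  by_cases hs : u ⊆ x
  · rw [if_pos hs]
    rw [if_pos (h3.mpr hs), if_neg (by simpa using hu.ne_empty)] at hsplit
    linarith
  · rw [if_neg hs]
    rw [if_neg (fun h => hs (h3.mp h)), if_neg (by simpa using hu.ne_empty)] at hsplit
    linarith

end Aux

/-- Green function candidate: `g(x,y) = ω(x) ω(y) χ(star(x) ∩ star(y))`. -/
private def gmat {V : Type*} [DecidableEq V] (G : Finset (Finset V)) :
    Matrix G G ℚ := fun x y =>
  om (x : Finset V) * om (y : Finset V) *
    ∑ u ∈ G.filter (fun u => (x : Finset V) ⊆ u ∧ (y : Finset V) ⊆ u), om u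

section Main

variable {V : Type*} [DecidableEq V] {G : Finset (Finset V)}

/-- L1 : inner sum over faces contained in `u` and meeting `x`. -/
private lemma L1 (hsub : ∀ x ∈ G, ∀ y : Finset V, y ⊆ x → y.Nonempty → y ∈ G)
    (u : Finset V) (hu : u ∈ G) (hune : u.Nonempty) (x : Finset V) :
    ∑ y ∈ G.filter (fun y => y ⊆ u ∧ (x ∩ y).Nonempty), om y
      = if u ⊆ x then 1 else 0 := by
  have hset : G.filter (fun y => y ⊆ u ∧ (x ∩ y).Nonempty)
      = u.powerset.filter (fun y => (x ∩ y).Nonempty) := by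
    ext y
    simp only [mem_filter, mem_powerset]
    constructor
    · rintro ⟨-, h1, h2⟩; exact ⟨h1, h2⟩
    · rintro ⟨h1, h2⟩
      exact ⟨hsub u hu y h1 (h2.mono Finset.inter_subset_right), h1, h2⟩
  rw [hset]
  have hsign : ∀ y ∈ u.powerset.filter (fun y => (x ∩ y).Nonempty),
      om y = -(-1:ℚ)^y.card := by
    intro y hy
    rw [mem_filter] at hy
    exact om_eq y (hy.2.mono Finset.inter_subset_right)
  rw [Finset.sum_congr rfl hsign, Finset.sum_neg_distrib, keysum u x hune, neg_neg]

/-- L2 : sum over the interval `[z, x]`. -/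
private lemma L2 (hne : ∀ x ∈ G, x.Nonempty)
    (hsub : ∀ x ∈ G, ∀ y : Finset V, y ⊆ x → y.Nonempty → y ∈ G)
    (x z : Finset V) (hx : x ∈ G) (hz : z ∈ G) :
    ∑ u ∈ G.filter (fun u => z ⊆ u ∧ u ⊆ x), om u
      = if x = z then om z else 0 := by
  have hzne : z.Nonempty := hne z hz
  by_cases hzx : z ⊆ x
  · have hset : G.filter (fun u => z ⊆ u ∧ u ⊆ x)
        = x.powerset.filter (fun u => z ⊆ u) := by
      ext u
      simp only [mem_filter, mem_powerset]
      constructor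
      · rintro ⟨-, h1, h2⟩; exact ⟨h2, h1⟩
      · rintro ⟨h1, h2⟩
        exact ⟨hsub x hx u h1 (hzne.mono h2), h2, h1⟩
    rw [hset]
    have hbij : ∑ u ∈ x.powerset.filter (fun u => z ⊆ u), om u
        = ∑ v ∈ (x \ z).powerset, om (z ∪ v) := by
      refine Finset.sum_nbij' (fun u => u \ z) (fun v => z ∪ v) ?_ ?_ ?_ ?_ ?_
      · intro u hu
        simp only [mem_filter, mem_powerset] at hu ⊢
        exact Finset.sdiff_subset_sdiff hu.1 (Finset.Subset.refl z)
      · intro v hv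
        simp only [mem_filter, mem_powerset] at hv ⊢
        exact ⟨Finset.union_subset hzx (hv.trans Finset.sdiff_subset),
          Finset.subset_union_left⟩
      · intro u hu
        simp only [mem_filter, mem_powerset] at hu
        show z ∪ u \ z = u
        exact Finset.union_sdiff_of_subset hu.2
      · intro v hv
        simp only [mem_powerset] at hv
        have hd : Disjoint z v := by
          refine Finset.disjoint_left.mpr fun a ha hav => ?_
          exact (Finset.mem_sdiff.mp (hv hav)).2 ha
        show (z ∪ v) \ z = v
        exact Finset.union_sdiff_cancel_left hd
      · intro u hu
        simp only [mem_filter, mem_powerset] at hu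
        show om u = om (z ∪ u \ z)
        rw [Finset.union_sdiff_of_subset hu.2]
    rw [hbij]
    have hcard : ∀ v ∈ (x \ z).powerset, om (z ∪ v) = om z * (-1:ℚ)^v.card := by
      intro v hv
      simp only [mem_powerset] at hv
      have hd : Disjoint z v := by
        refine Finset.disjoint_left.mpr fun a ha hav => ?_
        exact (Finset.mem_sdiff.mp (hv hav)).2 ha
      rw [om, om, Finset.card_union_of_disjoint hd]
      obtain ⟨n, hn⟩ : ∃ n, z.card = n + 1 :=
        ⟨z.card - 1, (Nat.succ_pred_eq_of_pos (Finset.card_pos.mpr hzne)).symm⟩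
      rw [hn]
      have e1 : n + 1 + v.card - 1 = n + v.card := by omega
      have e2 : n + 1 - 1 = n := by omega
      rw [e1, e2, pow_add]
    rw [Finset.sum_congr rfl hcard, ← Finset.mul_sum, powsumQ]
    have hiff : (x \ z = ∅) ↔ x = z :=
      ⟨fun h => Finset.Subset.antisymm (Finset.sdiff_eq_empty_iff_subset.mp h) hzx,
       fun h => by rw [h]; exact Finset.sdiff_self z⟩
    by_cases hxz : x = z
    · rw [if_pos (hiff.mpr hxz), if_pos hxz, mul_one]
    · rw [if_neg (fun h => hxz (hiff.mp h)), if_neg hxz, mul_zero]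
  · have hempty : G.filter (fun u => z ⊆ u ∧ u ⊆ x) = ∅ :=
      Finset.filter_false_of_mem fun u hu h => hzx (h.1.trans h.2)
    rw [hempty, Finset.sum_empty,
      if_neg (fun h => hzx (by rw [h]))]

/-- L3 : sum over all faces contained in `u`. -/
private lemma L3 (hne : ∀ x ∈ G, x.Nonempty)
    (hsub : ∀ x ∈ G, ∀ y : Finset V, y ⊆ x → y.Nonempty → y ∈ G)
    (u : Finset V) (hu : u ∈ G) (hune : u.Nonempty) :
    ∑ y ∈ G.filter (fun y => y ⊆ u), om y = 1 := by
  have hset : G.filter (fun y => y ⊆ u)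
      = G.filter (fun y => y ⊆ u ∧ (u ∩ y).Nonempty) := by
    ext y
    simp only [mem_filter]
    constructor
    · rintro ⟨hy, h1⟩
      exact ⟨hy, h1, by
        have : u ∩ y = y := Finset.inter_eq_right.mpr h1
        rw [this]; exact hne y hy⟩
    · rintro ⟨hy, h1, -⟩; exact ⟨hy, h1⟩
  rw [hset, L1 hsub u hu hune u, if_pos (Finset.Subset.refl u)]

/-- the entrywise product identity `L' ⬝ g = 1`. -/
private lemma entry (hne : ∀ x ∈ G, x.Nonempty)
    (hsub : ∀ x ∈ G, ∀ y : Finset V, y ⊆ x → y.Nonempty → y ∈ G)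
    (x z : Finset V) (hx : x ∈ G) (hz : z ∈ G) :
    ∑ y ∈ G, (if (x ∩ y).Nonempty then (1:ℚ) else 0) *
      (om y * om z * ∑ u ∈ G.filter (fun u => y ⊆ u ∧ z ⊆ u), om u)
      = if x = z then 1 else 0 := by
  have step1 : ∑ y ∈ G, (if (x ∩ y).Nonempty then (1:ℚ) else 0) *
      (om y * om z * ∑ u ∈ G.filter (fun u => y ⊆ u ∧ z ⊆ u), om u)
      = ∑ y ∈ G.filter (fun y => (x ∩ y).Nonempty),
          om y * om z * ∑ u ∈ G.filter (fun u => y ⊆ u ∧ z ⊆ u), om u := by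
    rw [Finset.sum_filter]
    exact Finset.sum_congr rfl fun y _ => by
      by_cases h : (x ∩ y).Nonempty <;> simp [h]
  rw [step1]
  have step2 : ∀ y : Finset V,
      ∑ u ∈ G.filter (fun u => y ⊆ u ∧ z ⊆ u), om u
      = ∑ u ∈ G.filter (fun u => z ⊆ u), (if y ⊆ u then om u else 0) := by
    intro y
    rw [← Finset.sum_filter, Finset.filter_filter]
    apply Finset.sum_congr _ (fun _ _ => rfl)
    ext u
    simp only [mem_filter]
    tauto
  calc
    ∑ y ∈ G.filter (fun y => (x ∩ y).Nonempty),
        om y * om z * ∑ u ∈ G.filter (fun u => y ⊆ u ∧ z ⊆ u), om u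
      = ∑ y ∈ G.filter (fun y => (x ∩ y).Nonempty),
          ∑ u ∈ G.filter (fun u => z ⊆ u),
            om y * om z * (if y ⊆ u then om u else 0) := by
        refine Finset.sum_congr rfl fun y _ => ?_
        rw [step2 y, Finset.mul_sum]
    _ = ∑ u ∈ G.filter (fun u => z ⊆ u),
          ∑ y ∈ G.filter (fun y => (x ∩ y).Nonempty),
            om y * om z * (if y ⊆ u then om u else 0) := Finset.sum_comm
    _ = ∑ u ∈ G.filter (fun u => z ⊆ u),
          (∑ y ∈ G.filter (fun y => y ⊆ u ∧ (x ∩ y).Nonempty), om y)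
            * (om z * om u) := by
        refine Finset.sum_congr rfl fun u _ => ?_
        simp only [mul_ite, mul_zero]
        rw [← Finset.sum_filter, Finset.filter_filter, Finset.sum_mul]
        refine Finset.sum_congr ?_ (fun y _ => by ring)
        ext w
        simp only [mem_filter]
        tauto
    _ = ∑ u ∈ G.filter (fun u => z ⊆ u),
          (if u ⊆ x then 1 else 0) * (om z * om u) := by
        refine Finset.sum_congr rfl fun u hu => ?_
        rw [mem_filter] at hu
        rw [L1 hsub u hu.1 (hne u hu.1) x]
    _ = ∑ u ∈ G.filter (fun u => z ⊆ u ∧ u ⊆ x), om z * om u := by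
        simp only [ite_mul, one_mul, zero_mul]
        rw [← Finset.sum_filter, Finset.filter_filter]
    _ = om z * ∑ u ∈ G.filter (fun u => z ⊆ u ∧ u ⊆ x), om u := by
        rw [Finset.mul_sum]
    _ = om z * (if x = z then om z else 0) := by rw [L2 hne hsub x z hx hz]
    _ = if x = z then 1 else 0 := by
        by_cases h : x = z
        · rw [if_pos h, if_pos h, om_sq]
        · rw [if_neg h, if_neg h, mul_zero]

end Main

/-- the super trace of the Green function `g = (L')⁻¹`
equals the Euler characteristic. -/
theorem superTrace_green_eq_eulerChar {V : Type*} [DecidableEq V]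
    (G : Finset (Finset V))
    (hne : ∀ x ∈ G, x.Nonempty)
    (hsub : ∀ x ∈ G, ∀ y : Finset V, y ⊆ x → y.Nonempty → y ∈ G)
    (hinv : IsUnit (connMat G)) :
    ∑ x : G, (-1 : ℚ) ^ ((x : Finset V).card - 1) * (connMat G)⁻¹ x x
      = eulerChar G := by
  have hmul : connMat G * gmat G = 1 := by
    ext x z
    rw [Matrix.mul_apply, Matrix.one_apply]
    have h0 : ∀ y : G, connMat G x y * gmat G y z
        = (if ((x : Finset V) ∩ (y : Finset V)).Nonempty then (1:ℚ) else 0) *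
          (om (y : Finset V) * om (z : Finset V) *
            ∑ u ∈ G.filter (fun u => (y : Finset V) ⊆ u ∧ (z : Finset V) ⊆ u), om u) :=
      fun y => rfl
    rw [Finset.sum_congr rfl (fun y _ => h0 y), Finset.sum_coe_sort G
      (fun y => (if ((x : Finset V) ∩ y).Nonempty then (1:ℚ) else 0) *
        (om y * om (z : Finset V) *
          ∑ u ∈ G.filter (fun u => y ⊆ u ∧ (z : Finset V) ⊆ u), om u))]
    rw [entry hne hsub _ _ x.2 z.2]
    by_cases h : (x : Finset V) = (z : Finset V)
    · rw [if_pos h, if_pos (Subtype.ext h)]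
    · rw [if_neg h, if_neg (fun hh => h (congrArg _ hh))]
  have hinv_eq : (connMat G)⁻¹ = gmat G := Matrix.inv_eq_right_inv hmul
  rw [hinv_eq]
  have hdiag : ∀ x : G, (-1 : ℚ) ^ ((x : Finset V).card - 1) * gmat G x x
      = om (x : Finset V) * ∑ u ∈ G.filter (fun u => (x : Finset V) ⊆ u), om u := by
    intro x
    show om (x : Finset V) * (om (x : Finset V) * om (x : Finset V) *
      ∑ u ∈ G.filter (fun u => (x : Finset V) ⊆ u ∧ (x : Finset V) ⊆ u), om u) = _
    rw [om_sq, one_mul]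
    congr 1
    apply Finset.sum_congr _ (fun _ _ => rfl)
    ext u; simp [and_self]
  rw [Finset.sum_congr rfl (fun x _ => hdiag x), Finset.sum_coe_sort G
    (fun x => om x * ∑ u ∈ G.filter (fun u => x ⊆ u), om u)]
  calc
    ∑ x ∈ G, om x * ∑ u ∈ G.filter (fun u => x ⊆ u), om u
      = ∑ x ∈ G, ∑ u ∈ G, (if x ⊆ u then om x * om u else 0) := by
        refine Finset.sum_congr rfl fun x _ => ?_
        rw [Finset.mul_sum, Finset.sum_filter]
    _ = ∑ u ∈ G, ∑ x ∈ G, (if x ⊆ u then om x * om u else 0) := Finset.sum_comm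
    _ = ∑ u ∈ G, (∑ x ∈ G.filter (fun x => x ⊆ u), om x) * om u := by
        refine Finset.sum_congr rfl fun u _ => ?_
        rw [Finset.sum_mul, Finset.sum_filter]
    _ = ∑ u ∈ G, om u := by
        refine Finset.sum_congr rfl fun u hu => ?_
        rw [L3 hne hsub u hu (hne u hu), one_mul]
    _ = eulerChar G := rfl
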